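/- Let v2, v3 : ℝ → ℝ be twice continuously differentiable functions with v2'(1) = 0, v3'(2π/3) = 0, v2''(1) > 0, v3''(2π/3) > 0. Define the energy E(λ, α1, α2) = 2v2(λ) + (1/2)v2(3/2 + λ cos α1) + (1/2)v2(3/2 + λ cos α2) + 2v3(α1) + 2v3(α2) + v3(β(α1,π)) + v3(β(α2,π)) with β(α,γ) = 2 arcsin(sin α sin(γ/2)). Then the Hessian of E at (λ, α1, α2) = (1, 2π/3, 2π/3) is positive definite. -/

import Mathlib

/-!
Near the planar point the angles lie in `(π/2, 3π/2)`, where `β α π = 2π - 2α`, so `Esym` agrees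
there with a smooth energy. The Hessian form in a direction `v` is the second derivative of that
energy along the line `t ↦ p + t • v`. Every summand is `v₂ ∘ h` or `v₃ ∘ h` with `h 0` a critical
point of `v₂` or `v₃`, so it contributes `vᵢ''(h 0) * (h' 0)²` and the `vᵢ'(h 0) * h'' 0` terms
vanish. With `A = v₂''(1)`, `B = v₃''(2π/3)` and `v = (x, a, b)` the form is
`2A x² + Σ_{c ∈ {a, b}} (A/2)((x + √3 c)/2)² + 6B c²`, which is positive definite.
-/

open Real

noncomputable def β (α γ : ℝ) : ℝ := 2 * Real.arcsin (Real.sin α * Real.sin (γ / 2))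

noncomputable def Esym (v2 v3 : ℝ → ℝ) (p : ℝ × ℝ × ℝ) : ℝ :=
  2 * v2 p.1 + (1 / 2) * v2 (3 / 2 + p.1 * Real.cos p.2.1)
    + (1 / 2) * v2 (3 / 2 + p.1 * Real.cos p.2.2)
    + 2 * v3 p.2.1 + 2 * v3 p.2.2 + v3 (β p.2.1 π) + v3 (β p.2.2 π)

open Topology Set

theorem iteratedFDeriv_apply_const_eq_iteratedDeriv_line {𝕜 E F : Type*}
    [NontriviallyNormedField 𝕜] [NormedAddCommGroup E] [NormedSpace 𝕜 E] [NormedAddCommGroup F]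
    [NormedSpace 𝕜 F] {f : E → F} {n : ℕ} (hf : ContDiff 𝕜 n f) (p v : E) :
    iteratedFDeriv 𝕜 n f p (fun _ => v) = iteratedDeriv n (fun t : 𝕜 => f (p + t • v)) 0 := by
  have h := (ContinuousLinearMap.smulRight (1 : 𝕜 →L[𝕜] 𝕜) v).iteratedFDeriv_comp_right
    (f := fun z => f (p + z)) (by fun_prop) 0 le_rfl
  simp only [Function.comp_def, ContinuousLinearMap.smulRight_apply, one_apply_eq_self, zero_smul,
    iteratedDeriv_eq_iteratedFDeriv] at h ⊢
  simp [h, iteratedFDeriv_comp_add_left]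

theorem iteratedDeriv_two_comp {𝕜 : Type*} [NontriviallyNormedField 𝕜] {f h : 𝕜 → 𝕜}
    (hf : ContDiff 𝕜 2 f) (hh : ContDiff 𝕜 2 h) (t : 𝕜) :
    iteratedDeriv 2 (fun s => f (h s)) t =
      deriv (deriv f) (h t) * deriv h t ^ 2 + deriv f (h t) * deriv (deriv h) t := by
  have hf1 : Differentiable 𝕜 f := hf.differentiable (by norm_num)
  have hh1 : Differentiable 𝕜 h := hh.differentiable (by norm_num)
  have hf2 : Differentiable 𝕜 (deriv f) := (hf.iterate_deriv' 1 1).differentiable one_ne_zero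
  have hh2 : Differentiable 𝕜 (deriv h) := (hh.iterate_deriv' 1 1).differentiable one_ne_zero
  have hd : deriv (fun s => f (h s)) = fun s => deriv f (h s) * deriv h s :=
    funext fun s => deriv_comp s (hf1 _) (hh1 _)
  have hprod := ((hf2 (h t)).hasDerivAt.comp t (hh1 t).hasDerivAt).mul (hh2 t).hasDerivAt
  rw [iteratedDeriv_succ, iteratedDeriv_one, hd]
  exact hprod.deriv.trans (by rw [Function.comp_apply]; ring)

theorem iteratedDeriv_two_comp_of_deriv_eq_zero {𝕜 : Type*} [NontriviallyNormedField 𝕜]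
    {f h : 𝕜 → 𝕜} {t y c : 𝕜} (hf : ContDiff 𝕜 2 f) (hh : ContDiff 𝕜 2 h) (hy : h t = y)
    (hcrit : deriv f y = 0) (hc : HasDerivAt h c t) :
    iteratedDeriv 2 (fun s => f (h s)) t = deriv (deriv f) y * c ^ 2 := by
  rw [iteratedDeriv_two_comp hf hh, hy, hcrit, hc.deriv, zero_mul, add_zero]

theorem hasDerivAt_const_add_mul (c x t : ℝ) : HasDerivAt (fun s : ℝ => c + s * x) x t := by
  simpa using ((hasDerivAt_id t).mul_const x).const_add c

theorem cos_two_pi_div_three : cos (2 * π / 3) = -(1 / 2) := by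
  rw [show 2 * π / 3 = π - π / 3 by ring, cos_pi_sub, cos_pi_div_three]

theorem sin_two_pi_div_three : sin (2 * π / 3) = √3 / 2 := by
  rw [show 2 * π / 3 = π - π / 3 by ring, sin_pi_sub, sin_pi_div_three]

theorem hasDerivAt_three_halves_add_mul_cos (x a : ℝ) :
    HasDerivAt (fun t => 3 / 2 + (1 + t * x) * cos (2 * π / 3 + t * a))
      (-((x + √3 * a) / 2)) 0 := by
  refine (((hasDerivAt_const_add_mul 1 x 0).mul
    (hasDerivAt_const_add_mul (2 * π / 3) a 0).cos).const_add (3 / 2)).congr_deriv ?_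
  simp only [zero_mul, add_zero, one_mul, cos_two_pi_div_three, sin_two_pi_div_three]
  ring

theorem β_pi_of_mem_Ioo {α : ℝ} (h : α ∈ Ioo (π / 2) (3 * π / 2)) : β α π = 2 * π - 2 * α := by
  rw [β, sin_pi_div_two, mul_one, ← sin_pi_sub, arcsin_sin (by linarith [h.2]) (by linarith [h.1])]
  ring

noncomputable def angleTerm (v2 v3 : ℝ → ℝ) (l α : ℝ) : ℝ :=
  1 / 2 * v2 (3 / 2 + l * cos α) + 2 * v3 α + v3 (2 * π - 2 * α)

/-- Agrees with `Esym` near the planar point (`β_pi_of_mem_Ioo`) but is smooth everywhere, whereas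
the `arcsin` in `β` is not differentiable at `±1`. -/
noncomputable def EsymPlanar (v2 v3 : ℝ → ℝ) (p : ℝ × ℝ × ℝ) : ℝ :=
  2 * v2 p.1 + angleTerm v2 v3 p.1 p.2.1 + angleTerm v2 v3 p.1 p.2.2

theorem Esym_eventuallyEq_EsymPlanar (v2 v3 : ℝ → ℝ) {p : ℝ × ℝ × ℝ}
    (h₁ : p.2.1 ∈ Ioo (π / 2) (3 * π / 2)) (h₂ : p.2.2 ∈ Ioo (π / 2) (3 * π / 2)) :
    Esym v2 v3 =ᶠ[𝓝 p] EsymPlanar v2 v3 := by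
  filter_upwards [continuousAt_snd.fst.preimage_mem_nhds (isOpen_Ioo.mem_nhds h₁),
    continuousAt_snd.snd.preimage_mem_nhds (isOpen_Ioo.mem_nhds h₂)] with q hq₁ hq₂
  simp only [Esym, EsymPlanar, angleTerm, β_pi_of_mem_Ioo hq₁, β_pi_of_mem_Ioo hq₂]
  ring

theorem contDiff_EsymPlanar {v2 v3 : ℝ → ℝ} (hv2 : ContDiff ℝ 2 v2) (hv3 : ContDiff ℝ 2 v3) :
    ContDiff ℝ 2 (EsymPlanar v2 v3) := by
  unfold EsymPlanar angleTerm
  fun_prop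

section PlanarPoint

variable {v2 v3 : ℝ → ℝ} (hv2 : ContDiff ℝ 2 v2) (hv3 : ContDiff ℝ 2 v3)
  (hv2' : deriv v2 1 = 0) (hv3' : deriv v3 (2 * π / 3) = 0)
include hv2 hv3 hv2' hv3'

theorem iteratedDeriv_two_angleTerm_line (x a : ℝ) :
    iteratedDeriv 2 (fun t => angleTerm v2 v3 (1 + t * x) (2 * π / 3 + t * a)) 0 =
      deriv (deriv v2) 1 / 2 * ((x + √3 * a) / 2) ^ 2
        + 6 * deriv (deriv v3) (2 * π / 3) * a ^ 2 := by
  unfold angleTerm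
  rw [iteratedDeriv_fun_add (by fun_prop) (by fun_prop),
    iteratedDeriv_fun_add (by fun_prop) (by fun_prop),
    iteratedDeriv_const_mul _ (by fun_prop), iteratedDeriv_const_mul _ (by fun_prop),
    iteratedDeriv_two_comp_of_deriv_eq_zero hv2 (by fun_prop)
      (by simp [cos_two_pi_div_three]; norm_num) hv2' (hasDerivAt_three_halves_add_mul_cos x a),
    iteratedDeriv_two_comp_of_deriv_eq_zero hv3 (by fun_prop) (by simp) hv3'
      (hasDerivAt_const_add_mul _ a 0),
    iteratedDeriv_two_comp_of_deriv_eq_zero hv3 (by fun_prop) (by ring) hv3'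
      (((hasDerivAt_const_add_mul _ a 0).const_mul 2).const_sub (2 * π))]
  ring

theorem iteratedDeriv_two_EsymPlanar_line (x a b : ℝ) :
    iteratedDeriv 2
        (fun t : ℝ => EsymPlanar v2 v3 ((1, 2 * π / 3, 2 * π / 3) + t • (x, a, b))) 0 =
      2 * deriv (deriv v2) 1 * x ^ 2
        + (deriv (deriv v2) 1 / 2 * ((x + √3 * a) / 2) ^ 2
          + 6 * deriv (deriv v3) (2 * π / 3) * a ^ 2)
        + (deriv (deriv v2) 1 / 2 * ((x + √3 * b) / 2) ^ 2
          + 6 * deriv (deriv v3) (2 * π / 3) * b ^ 2) := by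
  have hangle : ∀ c, ContDiff ℝ 2 (fun t => angleTerm v2 v3 (1 + t * x) (2 * π / 3 + t * c)) := by
    intro c
    unfold angleTerm
    fun_prop
  simp only [EsymPlanar, Prod.smul_mk, Prod.mk_add_mk, smul_eq_mul]
  rw [iteratedDeriv_fun_add (by fun_prop) (hangle b).contDiffAt,
    iteratedDeriv_fun_add (by fun_prop) (hangle a).contDiffAt,
    iteratedDeriv_const_mul _ (by fun_prop),
    iteratedDeriv_two_comp_of_deriv_eq_zero hv2 (by fun_prop) (by simp) hv2'
      (hasDerivAt_const_add_mul 1 x 0),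
    iteratedDeriv_two_angleTerm_line hv2 hv3 hv2' hv3',
    iteratedDeriv_two_angleTerm_line hv2 hv3 hv2' hv3']
  ring

end PlanarPoint

theorem planar_hessian_form_pos {A B x a b : ℝ} (hA : 0 < A) (hB : 0 < B) (h : (x, a, b) ≠ 0) :
    0 < 2 * A * x ^ 2 + (A / 2 * ((x + √3 * a) / 2) ^ 2 + 6 * B * a ^ 2)
      + (A / 2 * ((x + √3 * b) / 2) ^ 2 + 6 * B * b ^ 2) := by
  have hxa : 0 ≤ A / 2 * ((x + √3 * a) / 2) ^ 2 := by positivity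
  have hxb : 0 ≤ A / 2 * ((x + √3 * b) / 2) ^ 2 := by positivity
  by_cases hab : a = 0 ∧ b = 0
  · obtain ⟨rfl, rfl⟩ := hab
    have hx : x ≠ 0 := by simpa [Prod.ext_iff] using h
    have : 0 < 2 * A * x ^ 2 := by positivity
    linarith
  · have hx : 0 ≤ 2 * A * x ^ 2 := by positivity
    have hab' : 0 < a ^ 2 + b ^ 2 := by
      rcases not_and_or.mp hab with h | h <;> positivity
    nlinarith

theorem hessian_posDef (v2 v3 : ℝ → ℝ)
    (hv2 : ContDiff ℝ 2 v2) (hv3 : ContDiff ℝ 2 v3)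
    (hv2' : deriv v2 1 = 0) (hv3' : deriv v3 (2 * π / 3) = 0)
    (hv2'' : 0 < deriv (deriv v2) 1) (hv3'' : 0 < deriv (deriv v3) (2 * π / 3)) :
    ∀ v : ℝ × ℝ × ℝ, v ≠ 0 →
      0 < iteratedFDeriv ℝ 2 (Esym v2 v3) (1, 2 * π / 3, 2 * π / 3) ![v, v] := by
  intro v hv
  have hangle : 2 * π / 3 ∈ Ioo (π / 2) (3 * π / 2) := ⟨by linarith [pi_pos], by linarith [pi_pos]⟩
  have hdiag : ![v, v] = fun _ => v := by funext i; fin_cases i <;> rfl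
  obtain ⟨x, a, b⟩ := v
  rw [((Esym_eventuallyEq_EsymPlanar v2 v3 hangle hangle).iteratedFDeriv ℝ 2).eq_of_nhds, hdiag,
    iteratedFDeriv_apply_const_eq_iteratedDeriv_line (contDiff_EsymPlanar hv2 hv3),
    iteratedDeriv_two_EsymPlanar_line hv2 hv3 hv2' hv3']
  exact planar_hessian_form_pos hv2'' hv3'' hv
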